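/- arXiv:2512.03764 — 2 statements merged into one kernel-verified Lean document; each statement's English description precedes it below -/
import Mathlib

section
/- Let K ∈ ℝ^{m×n} and let P ∈ ℝ^{n×n} be a symmetric matrix satisfying the Lyapunov equation P = (A + BK)ᵀ P (A + BK) + Q + Kᵀ R K. Then for every state x ∈ ℝ^n and input u ∈ ℝ^m, writing η := u − Kx, the off-policy Bellman identity holds: xᵀ P x = xᵀ (Q + Kᵀ R K) x + (Ax + Bu)ᵀ P (Ax + Bu) + ηᵀ Bᵀ P B η − 2 (Ax + Bu)ᵀ P B η. -/
open Matrix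

noncomputable section

/-- The off-policy Bellman identity for a solution of the Lyapunov equation. -/
theorem offpolicy_bellman_identity
    {n m : ℕ}
    (A : Matrix (Fin n) (Fin n) ℝ) (B : Matrix (Fin n) (Fin m) ℝ)
    (Q : Matrix (Fin n) (Fin n) ℝ) (R : Matrix (Fin m) (Fin m) ℝ)
    (hQ : Q.IsSymm) (hR : R.IsSymm)
    (K : Matrix (Fin m) (Fin n) ℝ)
    (P : Matrix (Fin n) (Fin n) ℝ) (hPsymm : P.IsSymm)
    (hP : P = (A + B * K)ᵀ * P * (A + B * K) + Q + Kᵀ * R * K)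
    (x : Fin n → ℝ) (u : Fin m → ℝ) :
    x ⬝ᵥ P *ᵥ x =
      x ⬝ᵥ (Q + Kᵀ * R * K) *ᵥ x
      + (A *ᵥ x + B *ᵥ u) ⬝ᵥ P *ᵥ (A *ᵥ x + B *ᵥ u)
      + (u - K *ᵥ x) ⬝ᵥ (Bᵀ * P * B) *ᵥ (u - K *ᵥ x)
      - 2 * ((A *ᵥ x + B *ᵥ u) ⬝ᵥ (P * B) *ᵥ (u - K *ᵥ x)) := by
  have hswap : ∀ a b : Fin n → ℝ, a ⬝ᵥ P *ᵥ b = b ⬝ᵥ P *ᵥ a := by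
    intro a b
    rw [dotProduct_mulVec, ← mulVec_transpose, hPsymm.eq, dotProduct_comm]
  set z := A *ᵥ x + B *ᵥ u with hz
  set y := (A + B * K) *ᵥ x with hy
  set η := u - K *ᵥ x with hη
  have hw : B *ᵥ η = z - y := by
    simp [hη, hz, hy, Matrix.mulVec_sub, Matrix.add_mulVec, ← mulVec_mulVec]
  have h1 : η ⬝ᵥ (Bᵀ * P * B) *ᵥ η = (B *ᵥ η) ⬝ᵥ P *ᵥ (B *ᵥ η) := by
    rw [← mulVec_mulVec, ← mulVec_mulVec, dotProduct_mulVec, vecMul_transpose]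
  have h2 : z ⬝ᵥ (P * B) *ᵥ η = z ⬝ᵥ P *ᵥ (B *ᵥ η) := by
    rw [← mulVec_mulVec]
  have h3 : x ⬝ᵥ P *ᵥ x = y ⬝ᵥ P *ᵥ y + x ⬝ᵥ (Q + Kᵀ * R * K) *ᵥ x := by
    conv_lhs => rw [hP]
    rw [Matrix.add_mulVec, Matrix.add_mulVec, dotProduct_add, dotProduct_add, hy,
      ← mulVec_mulVec, ← mulVec_mulVec, dotProduct_mulVec, vecMul_transpose]
    rw [show x ⬝ᵥ (Q + Kᵀ * R * K) *ᵥ x = x ⬝ᵥ Q *ᵥ x + x ⬝ᵥ (Kᵀ * R * K) *ᵥ x by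
      rw [Matrix.add_mulVec, dotProduct_add]]
    ring
  rw [h1, h2, h3, hw]
  simp only [Matrix.mulVec_sub, dotProduct_sub, sub_dotProduct, hswap y z]
  ring
end
end

section
/- Let R ∈ ℝ^{m×m} be symmetric positive definite, E ∈ ℝ^{m×m} symmetric positive semidefinite, and G ∈ ℝ^{m×n}. Let ε satisfy 0 ≤ ε ≤ λ1(R)/2, and let Ê ∈ ℝ^{m×m} be symmetric with ‖Ê − E‖ ≤ ε and Ĝ ∈ ℝ^{m×n} with ‖Ĝ − G‖ ≤ ε. Then R + E and R + Ê are invertible and ‖(R + Ê)^{-1} Ĝ − (R + E)^{-1} G‖ ≤ ε ( 2‖G‖/λ1(R)² + 2/λ1(R) ). -/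
open Matrix

noncomputable section

/-- spectral (operator 2-) norm of a real matrix -/
def spNorm {p q : ℕ} (M : Matrix (Fin p) (Fin q) ℝ) : ℝ :=
  ‖(Matrix.toEuclideanLin M).toContinuousLinearMap‖

/-- smallest eigenvalue (as infimum of the real spectrum) -/
def lam1 {p : ℕ} (M : Matrix (Fin p) (Fin p) ℝ) : ℝ :=
  sInf (spectrum ℝ M)

/-!
Write `λ = lam1 R`. In the Loewner order, `λ • 1 ≤ R` and `0 ≤ E`, while `-ε • 1 ≤ Ê - E` because
`|⟪x, (Ê - E) x⟫| ≤ ‖Ê - E‖ ‖x‖²`; hence `λ • 1 ≤ R + E` and `(λ - ε) • 1 ≤ R + Ê`.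
A matrix `P` with `c • 1 ≤ P`, `c > 0`, satisfies `c ‖x‖² ≤ ⟪x, P x⟫ ≤ ‖x‖ ‖P x‖`, so it is
invertible with `‖P⁻¹‖ ≤ c⁻¹`; this bounds `‖(R + E)⁻¹‖ ≤ 1/λ` and `‖(R + Ê)⁻¹‖ ≤ 1/(λ - ε) ≤ 2/λ`.
The estimate then follows from the identity
`(R + Ê)⁻¹ Ĝ - (R + E)⁻¹ G = (R + Ê)⁻¹ (Ĝ - G + (E - Ê) (R + E)⁻¹ G)`.
-/

open scoped Matrix.Norms.L2Operator MatrixOrder RealInnerProductSpace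

lemma spNorm_eq_norm {p q : ℕ} (M : Matrix (Fin p) (Fin q) ℝ) : spNorm M = ‖M‖ := rfl

theorem Matrix.posDef_of_smul_one_le {n : Type*} [DecidableEq n] {P : Matrix n n ℝ} {c : ℝ}
    (hc : 0 < c) (hP : c • 1 ≤ P) : P.PosDef := by
  simpa using (PosDef.one.smul hc).add_posSemidef (le_iff.1 hP)

theorem mul_norm_le_norm_apply_of_mul_norm_sq_le_inner {E : Type*} [NormedAddCommGroup E]
    [InnerProductSpace ℝ E] {T : E → E} {c : ℝ} (hT : ∀ x, c * ‖x‖ ^ 2 ≤ ⟪x, T x⟫) (x : E) :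
    c * ‖x‖ ≤ ‖T x‖ := by
  rcases eq_or_ne x 0 with rfl | hx
  · simp
  have hx := norm_pos_iff.2 hx
  nlinarith [hT x, real_inner_le_norm x (T x)]

theorem Matrix.inv_mul_sub_inv_mul_eq {n k α : Type*} [Fintype n] [DecidableEq n] [CommRing α]
    {A B : Matrix n n α} (hA : IsUnit A) (hB : IsUnit B) (G G' : Matrix n k α) :
    B⁻¹ * G' - A⁻¹ * G = B⁻¹ * (G' - G + (A - B) * (A⁻¹ * G)) := by
  rw [Matrix.sub_mul, mul_nonsing_inv_cancel_left _ _ ((isUnit_iff_isUnit_det A).1 hA),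
    Matrix.mul_add, Matrix.mul_sub, Matrix.mul_sub,
    nonsing_inv_mul_cancel_left _ _ ((isUnit_iff_isUnit_det B).1 hB)]
  abel

section
variable {n : Type*} [Fintype n] [DecidableEq n]

theorem Matrix.IsHermitian.smul_one_le_of_le_spectrum {A : Matrix n n ℝ} (hA : A.IsHermitian)
    {c : ℝ} (hc : ∀ r ∈ spectrum ℝ A, c ≤ r) : c • 1 ≤ A := by
  rw [le_iff, posSemidef_iff_isHermitian_and_spectrum_nonneg]
  refine ⟨hA.sub (isHermitian_one.smul (IsSelfAdjoint.all c)), ?_⟩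
  rw [← Algebra.algebraMap_eq_smul_one, ← spectrum.sub_singleton_eq]
  rintro _ ⟨r, hr, _, rfl, rfl⟩
  exact sub_nonneg.2 (hc r hr)

theorem Matrix.IsHermitian.smul_one_le_iff_forall_inner {A : Matrix n n ℝ} (hA : A.IsHermitian)
    {c : ℝ} :
    c • 1 ≤ A ↔ ∀ x : EuclideanSpace ℝ n, c * ‖x‖ ^ 2 ≤ ⟪x, toEuclideanCLM (𝕜 := ℝ) A x⟫ := by
  have hquad (x : EuclideanSpace ℝ n) : ⟪x, toEuclideanCLM (𝕜 := ℝ) (A - c • 1) x⟫ =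
      ⟪x, toEuclideanCLM (𝕜 := ℝ) A x⟫ - c * ‖x‖ ^ 2 := by
    rw [map_sub, map_smul, map_one, _root_.sub_apply, inner_sub_right]
    simp [real_inner_smul_right]
  rw [le_iff, posSemidef_iff_dotProduct_mulVec]
  simp only [hA.sub (isHermitian_one.smul (IsSelfAdjoint.all c)), true_and, star_trivial]
  refine ⟨fun h x => ?_, fun h x => ?_⟩
  · have := h x.ofLp
    rw [← inner_toEuclideanCLM, hquad] at this
    linarith
  · have := sub_nonneg.2 (h (WithLp.toLp 2 x))
    rwa [← hquad, inner_toEuclideanCLM] at this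

theorem Matrix.IsHermitian.neg_smul_one_le_of_norm_le {D : Matrix n n ℝ} (hD : D.IsHermitian)
    {ε : ℝ} (hε : ‖D‖ ≤ ε) : (-ε) • 1 ≤ D := by
  refine hD.smul_one_le_iff_forall_inner.2 fun x => ?_
  have := (abs_real_inner_le_norm x (toEuclideanCLM (𝕜 := ℝ) D x)).trans
    (mul_le_mul_of_nonneg_left ((toEuclideanCLM (𝕜 := ℝ) D).le_opNorm x) (norm_nonneg x))
  rw [l2_opNorm_toEuclideanCLM] at this
  nlinarith [neg_abs_le ⟪x, toEuclideanCLM (𝕜 := ℝ) D x⟫, sq_nonneg ‖x‖]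

theorem Matrix.norm_inv_le_of_smul_one_le {P : Matrix n n ℝ} {c : ℝ} (hc : 0 < c)
    (hP : c • 1 ≤ P) : ‖P⁻¹‖ ≤ c⁻¹ := by
  have hPd := posDef_of_smul_one_le hc hP
  have hPP : P * P⁻¹ = 1 := mul_nonsing_inv _ ((isUnit_iff_isUnit_det P).1 hPd.isUnit)
  rw [← l2_opNorm_toEuclideanCLM]
  refine ContinuousLinearMap.opNorm_le_bound _ (inv_nonneg.2 hc.le) fun y => ?_
  have hy : toEuclideanCLM (𝕜 := ℝ) P (toEuclideanCLM (𝕜 := ℝ) P⁻¹ y) = y := by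
    rw [← ContinuousLinearMap.comp_apply, ← ContinuousLinearMap.mul_def, ← map_mul, hPP, map_one]
    rfl
  have := mul_norm_le_norm_apply_of_mul_norm_sq_le_inner
    (hPd.isHermitian.smul_one_le_iff_forall_inner.1 hP) (toEuclideanCLM (𝕜 := ℝ) P⁻¹ y)
  rw [hy] at this
  rw [inv_mul_eq_div, le_div_iff₀ hc]
  linarith

theorem Matrix.norm_inv_mul_sub_inv_mul_le {k : Type*} [Fintype k] [DecidableEq k]
    {A B : Matrix n n ℝ} (hA : IsUnit A) (hB : IsUnit B) (G G' : Matrix n k ℝ) :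
    ‖B⁻¹ * G' - A⁻¹ * G‖ ≤ ‖B⁻¹‖ * (‖G' - G‖ + ‖A - B‖ * (‖A⁻¹‖ * ‖G‖)) := by
  rw [inv_mul_sub_inv_mul_eq hA hB]
  refine (l2_opNorm_mul _ _).trans (mul_le_mul_of_nonneg_left ?_ (norm_nonneg _))
  refine (norm_add_le _ _).trans (add_le_add_right ?_ _)
  exact (l2_opNorm_mul _ _).trans (mul_le_mul_of_nonneg_left (l2_opNorm_mul _ _) (norm_nonneg _))

end

section
variable {p : ℕ} {A : Matrix (Fin p) (Fin p) ℝ}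

theorem Matrix.IsHermitian.lam1_smul_one_le (hA : A.IsHermitian) : lam1 A • 1 ≤ A :=
  hA.smul_one_le_of_le_spectrum fun _ hr => csInf_le A.finite_real_spectrum.bddBelow hr

theorem Matrix.PosSemidef.lam1_nonneg (hA : A.PosSemidef) : 0 ≤ lam1 A :=
  Real.sInf_nonneg fun _ hr => (posSemidef_iff_isHermitian_and_spectrum_nonneg.1 hA).2 hr

theorem Matrix.PosDef.lam1_pos [Nonempty (Fin p)] (hA : A.PosDef) : 0 < lam1 A := by
  have hmem : lam1 A ∈ spectrum ℝ A :=
    Set.Nonempty.csInf_mem ⟨_, hA.1.eigenvalues_mem_spectrum_real (Classical.arbitrary _)⟩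
      A.finite_real_spectrum
  rw [hA.1.spectrum_real_eq_range_eigenvalues] at hmem
  obtain ⟨i, hi⟩ := hmem
  exact hi ▸ hA.eigenvalues_pos i

end

/-- Perturbation bound for the Gauss–Newton direction `(R + E)⁻¹ G`. -/
theorem gn_direction_perturbation_bound
    {m n : ℕ}
    (R : Matrix (Fin m) (Fin m) ℝ) (hR : R.PosDef)
    (E : Matrix (Fin m) (Fin m) ℝ) (hE : E.PosSemidef)
    (G : Matrix (Fin m) (Fin n) ℝ)
    (ε : ℝ) (hε0 : 0 ≤ ε) (hε1 : ε ≤ lam1 R / 2)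
    (Ehat : Matrix (Fin m) (Fin m) ℝ) (hEhatsymm : Ehat.IsSymm)
    (hEhat : spNorm (Ehat - E) ≤ ε)
    (Ghat : Matrix (Fin m) (Fin n) ℝ) (hGhat : spNorm (Ghat - G) ≤ ε) :
    IsUnit (R + E) ∧ IsUnit (R + Ehat) ∧
    spNorm ((R + Ehat)⁻¹ * Ghat - (R + E)⁻¹ * G) ≤
      ε * (2 * spNorm G / (lam1 R) ^ 2 + 2 / lam1 R) := by
  simp only [spNorm_eq_norm] at hEhat hGhat ⊢
  -- `lam1 R = sInf ∅ = 0` when `m = 0`, so the main argument needs `Fin m` to be nonempty.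
  rcases isEmpty_or_nonempty (Fin m) with hm | hm
  · refine ⟨isUnit_of_subsingleton _, isUnit_of_subsingleton _, ?_⟩
    rw [Subsingleton.elim ((R + Ehat)⁻¹ * Ghat - (R + E)⁻¹ * G) 0, norm_zero]
    have := hR.posSemidef.lam1_nonneg
    positivity
  set lam := lam1 R
  have hlam : 0 < lam := hR.lam1_pos
  have hA : lam • 1 ≤ R + E := le_add_of_le_of_nonneg hR.1.lam1_smul_one_le hE.nonneg
  have hB : (lam - ε) • 1 ≤ R + Ehat := by
    have hD : (-ε) • 1 ≤ Ehat - E :=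
      ((isHermitian_iff_isSymm.2 hEhatsymm).sub hE.1).neg_smul_one_le_of_norm_le hEhat
    calc (lam - ε) • (1 : Matrix (Fin m) (Fin m) ℝ) = lam • 1 + (-ε) • 1 := by
          rw [sub_eq_add_neg, add_smul]
      _ ≤ R + E + (Ehat - E) := add_le_add hA hD
      _ = R + Ehat := by abel
  have hlam' : 0 < lam - ε := by linarith
  have hAu := (posDef_of_smul_one_le hlam hA).isUnit
  have hBu := (posDef_of_smul_one_le hlam' hB).isUnit
  refine ⟨hAu, hBu, ?_⟩
  have hAB : ‖R + E - (R + Ehat)‖ ≤ ε := by rwa [add_sub_add_left_eq_sub, norm_sub_rev]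
  calc _ ≤ ‖(R + Ehat)⁻¹‖ * (‖Ghat - G‖ + ‖R + E - (R + Ehat)‖ * (‖(R + E)⁻¹‖ * ‖G‖)) :=
        norm_inv_mul_sub_inv_mul_le hAu hBu G Ghat
    _ ≤ (lam / 2)⁻¹ * (ε + ε * (lam⁻¹ * ‖G‖)) := by
        gcongr
        · exact (norm_inv_le_of_smul_one_le hlam' hB).trans (by gcongr; linarith)
        · exact norm_inv_le_of_smul_one_le hlam hA
    _ = ε * (2 * ‖G‖ / lam ^ 2 + 2 / lam) := by
        field_simp
        ring
end
end
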